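/- arXiv:2310.08806 — 9 statements merged into one kernel-verified Lean document; each statement's English description precedes it below -/
import Mathlib

section
/- Let n ≥ 3 and let W : Fin n → ZMod 2 be a weight function on the vertices of the complete graph K_n. Then (K_n, W) is CL2 if and only if the total weight Σ_x W x equals 1 in ZMod 2. -/
open scoped Classical

/-- Adjacency function of a simple graph, with values in `ZMod 2`:
`adjE G x y = 1` iff `x` and `y` are adjacent. -/
noncomputable def adjE {V : Type*} (G : SimpleGraph V) (x y : V) : ZMod 2 :=
  if G.Adj x y then 1 else 0

/-- The weighted Rosenstiehl form `R_W x y = E x y + Σ_{z ∈ N(x) ∩ N(y)} W z` in `ZMod 2`. -/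
noncomputable def wRosForm {V : Type*} (G : SimpleGraph V) (W : V → ZMod 2) (x y : V) :
    ZMod 2 :=
  adjE G x y + ∑ᶠ z ∈ G.neighborSet x ∩ G.neighborSet y, W z

/-- Weighted (EN2): `R_W x y = 0` for all distinct non-adjacent `x`, `y`. -/
def wEN2 {V : Type*} (G : SimpleGraph V) (W : V → ZMod 2) : Prop :=
  ∀ x y : V, x ≠ y → ¬ G.Adj x y → wRosForm G W x y = 0

/-- Weighted (RC): the weighted Rosenstiehl form is a coboundary on the edges. -/
def wRC {V : Type*} (G : SimpleGraph V) (W : V → ZMod 2) : Prop :=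
  ∃ χ : V → ZMod 2, ∀ x y : V, G.Adj x y → wRosForm G W x y = χ x + χ y

/-- A weighted graph is CL2 when it satisfies weighted (EN2) and weighted (RC). -/
def CL2 {V : Type*} (G : SimpleGraph V) (W : V → ZMod 2) : Prop :=
  wEN2 G W ∧ wRC G W

lemma ros_top {n : ℕ} (W : Fin n → ZMod 2) {x y : Fin n} (h : x ≠ y) :
    wRosForm (⊤ : SimpleGraph (Fin n)) W x y = 1 + ∑ z, W z + (W x + W y) := by
  have hadj : (⊤ : SimpleGraph (Fin n)).Adj x y := h
  have hset : (⊤ : SimpleGraph (Fin n)).neighborSet x ∩ (⊤ : SimpleGraph (Fin n)).neighborSet y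
      = ↑(Finset.univ \ {x, y} : Finset (Fin n)) := by
    ext z
    simp [SimpleGraph.neighborSet, eq_comm, and_comm]
  rw [wRosForm, hset, finsum_mem_coe_finset, adjE, if_pos hadj]
  have hxy : ∑ z ∈ ({x, y} : Finset (Fin n)), W z = W x + W y := Finset.sum_pair h
  have h2 : ∑ z ∈ Finset.univ \ {x, y}, W z + (W x + W y) = ∑ z, W z := by
    rw [← hxy]; exact Finset.sum_sdiff (Finset.subset_univ _)
  have h3 : ∑ z ∈ Finset.univ \ {x, y}, W z = ∑ z, W z - (W x + W y) :=
    eq_sub_of_add_eq h2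
  rw [h3, CharTwo.sub_eq_add]
  ring

/-- For `n ≥ 3`, a weighting `W` of the complete graph `K_n` is CL2 iff the
total weight is `1` in `ZMod 2`. -/
theorem stmt1 (n : ℕ) (hn : 3 ≤ n) (W : Fin n → ZMod 2) :
    CL2 (⊤ : SimpleGraph (Fin n)) W ↔ ∑ x, W x = 1 := by
  constructor
  · rintro ⟨-, χ, hχ⟩
    set a : Fin n := ⟨0, by omega⟩
    set b : Fin n := ⟨1, by omega⟩
    set c : Fin n := ⟨2, by omega⟩
    have hab : a ≠ b := by simp [a, b, Fin.ext_iff]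
    have hbc : b ≠ c := by simp [b, c, Fin.ext_iff]
    have hac : a ≠ c := by simp [a, c, Fin.ext_iff]
    have e1 := hχ a b hab; have e2 := hχ b c hbc; have e3 := hχ a c hac
    rw [ros_top W hab] at e1
    rw [ros_top W hbc] at e2
    rw [ros_top W hac] at e3
    revert e1 e2 e3
    generalize (∑ z, W z) = S
    generalize W a = wa; generalize W b = wb; generalize W c = wc
    generalize χ a = ca; generalize χ b = cb; generalize χ c = cc
    revert S wa wb wc ca cb cc
    decide
  · intro hS
    refine ⟨fun x y hne hadj => absurd hne (by simpa using hadj), W, fun x y hadj => ?_⟩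
    have hne : x ≠ y := hadj.ne
    rw [ros_top W hne, hS]
    revert hS
    generalize W x = wx; generalize W y = wy; generalize (∑ z, W z) = S
    revert S wx wy
    decide
end

section
/- Let n ≥ 5 and let W be a weight function on the cycle graph C_n. Then (C_n, W) is CL2 if and only if n is even and W is identically zero. -/
open scoped Classical

/-- The cycle graph `C_n` on vertices `ZMod n`, with `i` adjacent to `i + 1` and `i - 1`. -/
def cycleGraph (n : ℕ) : SimpleGraph (ZMod n) where
  Adj i j := i ≠ j ∧ (j = i + 1 ∨ j = i - 1)
  symm := by
    constructor
    rintro i j ⟨h, h1 | h1⟩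
    · exact ⟨h.symm, Or.inr (by rw [h1]; ring)⟩
    · exact ⟨h.symm, Or.inl (by rw [h1]; ring)⟩
  loopless := ⟨fun i h => h.1 rfl⟩

/-!
On `C_n` with `n ≥ 5`, two vertices at distance one have no common neighbour and two
vertices at distance two have exactly one. Hence (RC) forces `χ (x + 1) = χ x + 1`, which
after going once around the cycle gives `n ≡ 0 mod 2`, while (EN2) at the pair `v - 1, v + 1`
reads `W v = 0`. Conversely, for `W = 0` the form is the adjacency function itself, so (EN2)
is automatic and (RC) asks for a proper 2-colouring, which the reduction `ZMod n → ZMod 2`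
provides for even `n`.
-/

lemma ZMod.natCast_ne_zero_of_pos_of_lt {n k : ℕ} (hk : 0 < k) (hkn : k < n) :
    (k : ZMod n) ≠ 0 := fun h =>
  absurd (Nat.le_of_dvd hk ((ZMod.natCast_eq_zero_iff k n).1 h)) (by omega)

lemma nsmul_eq_zero_of_map_add_one {n : ℕ} {M : Type*} [AddLeftCancelMonoid M]
    (f : ZMod n → M) (a : M) (hf : ∀ x, f (x + 1) = f x + a) : n • a = 0 := by
  have hk : ∀ k : ℕ, f k = f 0 + k • a := by
    intro k
    induction k with
    | zero => simp
    | succ k ih => rw [Nat.cast_succ, hf, ih, succ_nsmul, add_assoc]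
  simpa [ZMod.natCast_self] using (hk n).symm

section RosenstiehlForm

variable {V : Type*} (G : SimpleGraph V)

lemma wRosForm_zero (x y : V) : wRosForm G 0 x y = adjE G x y := by
  simp [wRosForm]

variable {G}

lemma wRosForm_of_adj_of_neighborSet_inter_eq_empty (W : V → ZMod 2) {x y : V}
    (hxy : G.Adj x y) (hN : G.neighborSet x ∩ G.neighborSet y = ∅) :
    wRosForm G W x y = 1 := by
  rw [wRosForm, hN, finsum_mem_empty, adjE, if_pos hxy, add_zero]

lemma wRosForm_of_not_adj_of_neighborSet_inter_eq_singleton (W : V → ZMod 2) {x y z : V}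
    (hxy : ¬G.Adj x y) (hN : G.neighborSet x ∩ G.neighborSet y = {z}) :
    wRosForm G W x y = W z := by
  rw [wRosForm, hN, finsum_mem_singleton, adjE, if_neg hxy, zero_add]

variable (G)

lemma wEN2_zero : wEN2 G 0 := fun x y _ hxy => by
  rw [wRosForm_zero, adjE, if_neg hxy]

variable {G}

lemma wRC_zero_of_coloring (c : G.Coloring (ZMod 2)) : wRC G 0 := by
  refine ⟨c, fun x y hxy => ?_⟩
  have two_colours : ∀ a b : ZMod 2, a ≠ b → 1 = a + b := by decide
  rw [wRosForm_zero, adjE, if_pos hxy]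
  exact two_colours _ _ (c.valid hxy)

lemma CL2_zero_of_coloring (c : G.Coloring (ZMod 2)) : CL2 G 0 :=
  ⟨wEN2_zero G, wRC_zero_of_coloring c⟩

end RosenstiehlForm

section CycleGraph

variable {n : ℕ}

lemma cycleGraph_adj_add_one (h1 : (1 : ZMod n) ≠ 0) (x : ZMod n) :
    (cycleGraph n).Adj x (x + 1) :=
  ⟨fun h => h1 (by linear_combination -h), Or.inl rfl⟩

lemma cycleGraph_not_adj_add_two (h1 : (1 : ZMod n) ≠ 0) (h3 : (3 : ZMod n) ≠ 0)
    (x : ZMod n) : ¬(cycleGraph n).Adj x (x + 2) := by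
  rintro ⟨-, h | h⟩
  · exact h1 (by linear_combination h)
  · exact h3 (by linear_combination h)

lemma cycleGraph_neighborSet_inter_add_one (h3 : (3 : ZMod n) ≠ 0) (x : ZMod n) :
    (cycleGraph n).neighborSet x ∩ (cycleGraph n).neighborSet (x + 1) = ∅ := by
  ext z
  simp only [Set.mem_inter_iff, SimpleGraph.mem_neighborSet, Set.mem_empty_iff_false,
    iff_false]
  rintro ⟨⟨hxz, hz | hz⟩, ⟨hyz, hz' | hz'⟩⟩
  · exact hyz hz.symm
  · exact hyz hz.symm
  · exact h3 (by linear_combination hz - hz')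
  · exact hxz (by linear_combination -hz')

lemma cycleGraph_neighborSet_inter_add_two (h1 : (1 : ZMod n) ≠ 0) (h2 : (2 : ZMod n) ≠ 0)
    (h4 : (4 : ZMod n) ≠ 0) (x : ZMod n) :
    (cycleGraph n).neighborSet x ∩ (cycleGraph n).neighborSet (x + 2) = {x + 1} := by
  ext z
  simp only [Set.mem_inter_iff, SimpleGraph.mem_neighborSet, Set.mem_singleton_iff]
  constructor
  · rintro ⟨⟨-, hz | hz⟩, ⟨-, hz' | hz'⟩⟩
    · exact absurd (by linear_combination hz - hz') h2
    · exact hz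
    · exact absurd (by linear_combination hz - hz') h4
    · exact absurd (by linear_combination hz - hz') h2
  · rintro rfl
    exact ⟨cycleGraph_adj_add_one h1 x,
      ⟨fun h => h1 (by linear_combination h), Or.inr (by ring)⟩⟩

lemma cycleGraph_even_of_wRC (h1 : (1 : ZMod n) ≠ 0) (h3 : (3 : ZMod n) ≠ 0)
    {W : ZMod n → ZMod 2} (hRC : wRC (cycleGraph n) W) : Even n := by
  obtain ⟨χ, hχ⟩ := hRC
  have step : ∀ x, χ (x + 1) = χ x + 1 := fun x => by
    have h := hχ x (x + 1) (cycleGraph_adj_add_one h1 x)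
    rw [wRosForm_of_adj_of_neighborSet_inter_eq_empty W (cycleGraph_adj_add_one h1 x)
      (cycleGraph_neighborSet_inter_add_one h3 x)] at h
    have solve : ∀ a b : ZMod 2, 1 = a + b → b = a + 1 := by decide
    exact solve _ _ h
  rw [← ZMod.natCast_eq_zero_iff_even, ← nsmul_one]
  exact nsmul_eq_zero_of_map_add_one χ 1 step

lemma cycleGraph_weight_eq_zero_of_wEN2 (h1 : (1 : ZMod n) ≠ 0) (h2 : (2 : ZMod n) ≠ 0)
    (h3 : (3 : ZMod n) ≠ 0) (h4 : (4 : ZMod n) ≠ 0) {W : ZMod n → ZMod 2}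
    (hEN2 : wEN2 (cycleGraph n) W) : W = 0 := by
  funext v
  have hR := wRosForm_of_not_adj_of_neighborSet_inter_eq_singleton W
    (cycleGraph_not_adj_add_two h1 h3 (v - 1)) (cycleGraph_neighborSet_inter_add_two h1 h2 h4 _)
  rw [sub_add_cancel] at hR
  rw [Pi.zero_apply, ← hR]
  exact hEN2 _ _ (fun h => h2 (by linear_combination -h)) (cycleGraph_not_adj_add_two h1 h3 _)

def cycleGraph.coloringOfEven (hn : 2 ∣ n) : (cycleGraph n).Coloring (ZMod 2) :=
  SimpleGraph.Coloring.mk (ZMod.castHom hn (ZMod 2)) fun {x y} hxy => by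
    rcases hxy with ⟨-, rfl | rfl⟩
    · rw [map_add, map_one, left_ne_add]
      exact one_ne_zero
    · rw [map_sub, map_one, ne_eq, eq_comm, sub_eq_self]
      exact one_ne_zero

end CycleGraph

/-- For `n ≥ 5`, a weighting `W` of the cycle graph `C_n` is CL2 iff `n` is even
and `W` is identically zero. -/
theorem stmt2 (n : ℕ) (hn : 5 ≤ n) (W : ZMod n → ZMod 2) :
    CL2 (cycleGraph n) W ↔ (Even n ∧ W = 0) := by
  have hk : ∀ k : ℕ, 0 < k → k < 5 → (k : ZMod n) ≠ 0 := fun k hk hk5 =>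
    ZMod.natCast_ne_zero_of_pos_of_lt hk (by omega)
  have h1 : (1 : ZMod n) ≠ 0 := by exact_mod_cast hk 1 (by norm_num) (by norm_num)
  have h2 : (2 : ZMod n) ≠ 0 := by exact_mod_cast hk 2 (by norm_num) (by norm_num)
  have h3 : (3 : ZMod n) ≠ 0 := by exact_mod_cast hk 3 (by norm_num) (by norm_num)
  have h4 : (4 : ZMod n) ≠ 0 := by exact_mod_cast hk 4 (by norm_num) (by norm_num)
  constructor
  · rintro ⟨hEN2, hRC⟩
    exact ⟨cycleGraph_even_of_wRC h1 h3 hRC, cycleGraph_weight_eq_zero_of_wEN2 h1 h2 h3 h4 hEN2⟩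
  · rintro ⟨hEven, rfl⟩
    exact CL2_zero_of_coloring (cycleGraph.coloringOfEven hEven.two_dvd)
end

section
/- Let G be a finite tree (a connected acyclic simple graph) and W a weight function on its vertices. Then (G, W) is CL2 if and only if W v = 0 for every vertex v of degree at least 2. -/
open scoped Classical

section Aux
variable {V : Type*} {G : SimpleGraph V}

/-- In an acyclic graph, adjacent vertices have no common neighbour. -/
lemma aux_no_triangle (hacyc : G.IsAcyclic) {x y z : V} (hxy : G.Adj x y)
    (hxz : G.Adj x z) (hyz : G.Adj y z) : False := by
  refine hacyc (SimpleGraph.Walk.cons hxy (.cons hyz (.cons hxz.symm .nil))) ?_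
  rw [SimpleGraph.Walk.cons_isCycle_iff]
  constructor
  · simp [SimpleGraph.Walk.cons_isPath_iff, hyz.ne, hxz.ne.symm, hxy.ne.symm]
  · simp [Sym2.eq_iff, hxz.ne, hxy.ne, hyz.ne]

/-- In an acyclic graph, two distinct non-adjacent vertices have at most one
common neighbour. -/
lemma aux_common_subsingleton (hacyc : G.IsAcyclic) {x y v w : V} (hxy : x ≠ y)
    (hxv : G.Adj x v) (hyv : G.Adj y v) (hxw : G.Adj x w) (hyw : G.Adj y w)
    (hvw : v ≠ w) : False := by
  refine hacyc (SimpleGraph.Walk.cons hxv (.cons hyv.symm (.cons hyw (.cons hxw.symm .nil)))) ?_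
  rw [SimpleGraph.Walk.cons_isCycle_iff]
  constructor
  · simp [SimpleGraph.Walk.cons_isPath_iff, hvw, hxy, hyv.ne', hyw.ne, hxw.ne', hxy.symm,
      hxv.ne']
  · simp [Sym2.eq_iff, hxy, hvw, hxv.ne, hxw.ne, fun h : x = w => hxw.ne h]

end Aux

/-- In an acyclic graph, `R_W x y = 1` on every edge. -/
lemma aux_ros_adj {V : Type*} {G : SimpleGraph V} (hacyc : G.IsAcyclic)
    (W : V → ZMod 2) {x y : V} (hxy : G.Adj x y) : wRosForm G W x y = 1 := by
  have hempty : G.neighborSet x ∩ G.neighborSet y = ∅ := by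
    ext z
    simp only [Set.mem_inter_iff, SimpleGraph.mem_neighborSet, Set.mem_empty_iff_false,
      iff_false, not_and]
    intro h1 h2
    exact aux_no_triangle hacyc hxy h1 h2
  rw [wRosForm, hempty, finsum_mem_empty, adjE, if_pos hxy, add_zero]

/-- Parity lemma: in a tree, unique-path lengths from a fixed root differ by one
along an edge (mod 2). -/
lemma aux_parity {V : Type*} {G : SimpleGraph V} (hacyc : G.IsAcyclic) {r : V}
    (f : ∀ v : V, G.Walk r v) (hf : ∀ v, (f v).IsPath) {x y : V} (hxy : G.Adj x y) :
    ((f y).length : ZMod 2) = ((f x).length : ZMod 2) + 1 := by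
  have huniq : ∀ (v : V) (q : G.Walk r v), q.IsPath → q = f v := by
    intro v q hq
    have := hacyc.path_unique ⟨q, hq⟩ ⟨f v, hf v⟩
    exact congrArg Subtype.val this
  by_cases hy : y ∈ (f x).support
  · -- f x passes through y, and the tail from y to x is the single edge
    have htake : ((f x).takeUntil y hy) = f y := huniq y _ ((hf x).takeUntil hy)
    have hdrop : ((f x).dropUntil y hy) = SimpleGraph.Walk.cons hxy.symm .nil := by
      have := hacyc.path_unique ⟨(f x).dropUntil y hy, (hf x).dropUntil hy⟩
        (SimpleGraph.Path.singleton hxy.symm)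
      exact congrArg Subtype.val this
    have hlen : (f x).length = (f y).length + 1 := by
      conv_lhs => rw [← SimpleGraph.Walk.take_spec (f x) hy]
      rw [SimpleGraph.Walk.length_append, htake, hdrop]
      simp
    rw [hlen]
    push_cast
    have h2 : ∀ a : ZMod 2, a = a + 1 + 1 := by decide
    exact h2 _
  · -- extend f x by the edge x-y
    have hpath : ((f x).concat hxy).IsPath := by
      rw [← SimpleGraph.Walk.isPath_reverse_iff, SimpleGraph.Walk.reverse_concat,
        SimpleGraph.Walk.cons_isPath_iff]
      refine ⟨(SimpleGraph.Walk.isPath_reverse_iff _).2 (hf x), ?_⟩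
      rw [SimpleGraph.Walk.support_reverse]
      simpa using hy
    have := huniq y _ hpath
    rw [← this, SimpleGraph.Walk.length_concat]
    push_cast
    ring

/-- A weighting of a finite tree is CL2 iff it assigns weight `0` to every vertex
of degree at least `2`. -/
theorem stmt3 {V : Type*} [Fintype V] (G : SimpleGraph V)
    (hconn : G.Connected) (hacyc : G.IsAcyclic) (W : V → ZMod 2) :
    CL2 G W ↔ ∀ v : V, 2 ≤ (G.neighborSet v).ncard → W v = 0 := by
  constructor
  · rintro ⟨hEN2, -⟩ v hv
    obtain ⟨x, hx, y, hy, hne⟩ := (Set.one_lt_ncard (Set.toFinite _)).1 hv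
    rw [SimpleGraph.mem_neighborSet] at hx hy
    have hnadj : ¬ G.Adj x y := fun h => aux_no_triangle hacyc h hx.symm hy.symm
    have h0 := hEN2 x y hne hnadj
    have hset : G.neighborSet x ∩ G.neighborSet y = {v} := by
      ext w
      simp only [Set.mem_inter_iff, SimpleGraph.mem_neighborSet, Set.mem_singleton_iff]
      constructor
      · rintro ⟨h1, h2⟩
        by_contra hwv
        exact aux_common_subsingleton hacyc hne h1 h2 hx.symm hy.symm hwv
      · rintro rfl
        exact ⟨hx.symm, hy.symm⟩
    rw [wRosForm, hset, finsum_mem_singleton, adjE, if_neg hnadj, zero_add] at h0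
    exact h0
  · intro hW
    constructor
    · intro x y hne hnadj
      rw [wRosForm, adjE, if_neg hnadj, zero_add]
      rcases Set.eq_empty_or_nonempty (G.neighborSet x ∩ G.neighborSet y) with h | ⟨v, hv⟩
      · rw [h, finsum_mem_empty]
      · have hset : G.neighborSet x ∩ G.neighborSet y = {v} := by
          ext w
          simp only [Set.mem_inter_iff, SimpleGraph.mem_neighborSet, Set.mem_singleton_iff]
          constructor
          · rintro ⟨h1, h2⟩
            by_contra hwv
            exact aux_common_subsingleton hacyc hne h1 h2 hv.1 hv.2 hwv
          · rintro rfl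
            exact ⟨hv.1, hv.2⟩
        rw [hset, finsum_mem_singleton]
        refine hW v ?_
        refine (Set.one_lt_ncard (Set.toFinite _)).2 ⟨x, hv.1.symm, y, hv.2.symm, hne⟩
    · -- weighted (RC) via bipartition of the tree
      have : Nonempty V := hconn.nonempty
      obtain ⟨r⟩ := this
      have hex : ∀ v : V, ∃ p : G.Walk r v, p.IsPath := fun v =>
        ⟨(hconn r v).some.toPath, ((hconn r v).some.toPath).2⟩
      choose f hf using hex
      refine ⟨fun v => ((f v).length : ZMod 2), fun x y hxy => ?_⟩
      show wRosForm G W x y = ((f x).length : ZMod 2) + ((f y).length : ZMod 2)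
      rw [aux_ros_adj hacyc W hxy, aux_parity hacyc f hf hxy]
      have h2 : ∀ a : ZMod 2, (1 : ZMod 2) = a + (a + 1) := by decide
      exact h2 _
end

section
/- If (V0, V1) is a split of a simple graph G and c is any vertex of G, then (V0, V1) is also a split of the local complement G*c. -/
/-- The local complement `G*c` of a simple graph `G` at a vertex `c`: distinct
vertices `u`, `v` are adjacent in `G*c` iff (`u ~ v` in `G`) XOR (`u` and `v` are
both neighbours of `c` in `G`). -/
def localComplement {V : Type*} (G : SimpleGraph V) (c : V) : SimpleGraph V where
  Adj u v := u ≠ v ∧ Xor' (G.Adj u v) (G.Adj c u ∧ G.Adj c v)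
  symm := ⟨by
    rintro u v ⟨h, hx⟩
    refine ⟨h.symm, ?_⟩
    rwa [G.adj_comm v u, and_comm]⟩
  loopless := ⟨fun u h => h.1 rfl⟩

/-- A split of a simple graph `G` on vertex set `V`: a partition `V = V0 ⊔ V1` with
`|V0| ≥ 2` and `|V1| ≥ 2`, such that the edges between `V0` and `V1` are exactly
those of a complete bipartite graph `K(U0, U1)` with `U0 ⊆ V0`, `U1 ⊆ V1`. -/
def IsSplit {V : Type*} (G : SimpleGraph V) (V0 V1 : Set V) : Prop :=
  V0 ∪ V1 = Set.univ ∧ Disjoint V0 V1 ∧ 2 ≤ V0.ncard ∧ 2 ≤ V1.ncard ∧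
    ∃ U0 ⊆ V0, ∃ U1 ⊆ V1, ∀ u ∈ V0, ∀ w ∈ V1, (G.Adj u w ↔ u ∈ U0 ∧ w ∈ U1)

/-
If `c ∈ V0`, the neighbours of `c` in `V1` are `U1` or nothing, according as `c ∈ U0`.
Toggling the edges between `N(c) ∩ V0` and `N(c) ∩ V1` therefore keeps the cut complete
bipartite: only the side `U0` changes, to its symmetric difference with `N(c)` when `c ∈ U0`.
The case `c ∈ V1` is the same with the two sides exchanged.
-/

section

variable {V : Type*} {G : SimpleGraph V} {V0 V1 : Set V}

theorem IsSplit.symm (h : IsSplit G V0 V1) : IsSplit G V1 V0 := by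
  obtain ⟨huniv, hdisj, h0, h1, U0, hU0, U1, hU1, hadj⟩ := h
  refine ⟨Set.union_comm V0 V1 ▸ huniv, hdisj.symm, h1, h0, U1, hU1, U0, hU0, ?_⟩
  intro w hw u hu
  rw [G.adj_comm, hadj u hu w hw, and_comm]

theorem IsSplit.localComplement_of_mem_left {c : V} (hc : c ∈ V0) (h : IsSplit G V0 V1) :
    IsSplit (localComplement G c) V0 V1 := by
  obtain ⟨huniv, hdisj, h0, h1, U0, hU0, U1, hU1, hadj⟩ := h
  refine ⟨huniv, hdisj, h0, h1, {u ∈ V0 | Xor (u ∈ U0) (c ∈ U0 ∧ G.Adj c u)},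
    Set.sep_subset _ _, U1, hU1, fun u hu w hw => ?_⟩
  have hne : u ≠ w := fun huw => Set.disjoint_left.mp hdisj hu (huw ▸ hw)
  simp only [localComplement, Set.mem_ofPred_eq, hadj u hu w hw, hadj c hc w hw, Xor', xor_def]
  tauto

end

/-- A split of `G` is also a split of the local complement `G*c`, for any vertex `c`. -/
theorem stmt7 {V : Type*} (G : SimpleGraph V) (c : V) (V0 V1 : Set V)
    (h : IsSplit G V0 V1) : IsSplit (localComplement G c) V0 V1 := by
  by_cases hc : c ∈ V0
  · exact h.localComplement_of_mem_left hc
  · have hc1 : c ∈ V1 := by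
      have hcuniv : c ∈ V0 ∪ V1 := h.1 ▸ Set.mem_univ c
      exact hcuniv.resolve_left hc
    exact (h.symm.localComplement_of_mem_left hc1).symm
end

section
/- If x and y are distinct non-adjacent vertices of a simple graph G, then the local complementations at x and y commute: (G*x)*y = (G*y)*x. -/
/-!
Local complementation at `c` toggles exactly the pairs inside the neighbourhood of `c`.
If `x` and `y` are not adjacent, complementing at `x` does not change the neighbourhood
of `y` (and vice versa), so both composites toggle the pairs inside `N(x)` and the pairs
inside `N(y)`; the two toggles commute because XOR does.
-/

theorem xor_right_comm (a b c : Prop) : Xor (Xor a b) c ↔ Xor (Xor a c) b := by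
  grind

section

variable {V : Type*} (G : SimpleGraph V)

theorem localComplement_adj {c u v : V} :
    (localComplement G c).Adj u v ↔ u ≠ v ∧ Xor (G.Adj u v) (G.Adj c u ∧ G.Adj c v) :=
  Iff.rfl

theorem localComplement_adj_of_not_adj {c d : V} (h : ¬ G.Adj c d) (u : V) :
    (localComplement G c).Adj d u ↔ G.Adj d u := by
  rw [localComplement_adj]
  exact ⟨fun ⟨_, hx⟩ => hx.or.resolve_right fun hcd => h hcd.1,
    fun hdu => ⟨G.ne_of_adj hdu, Or.inl ⟨hdu, fun hcd => h hcd.1⟩⟩⟩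

theorem localComplement_localComplement_adj {x y : V} (h : ¬ G.Adj x y) {u v : V} :
    (localComplement (localComplement G x) y).Adj u v ↔
      u ≠ v ∧ Xor (Xor (G.Adj u v) (G.Adj x u ∧ G.Adj x v)) (G.Adj y u ∧ G.Adj y v) := by
  rw [localComplement_adj, localComplement_adj_of_not_adj G h,
    localComplement_adj_of_not_adj G h, localComplement_adj]
  exact and_congr_right fun huv => by simp only [huv, ne_eq, not_false_eq_true, true_and]

end

theorem stmt8_general {V : Type*} (G : SimpleGraph V) (x y : V)
    (hadj : ¬ G.Adj x y) :
    localComplement (localComplement G x) y = localComplement (localComplement G y) x := by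
  ext u v
  rw [localComplement_localComplement_adj G hadj,
    localComplement_localComplement_adj G (fun h => hadj h.symm), xor_right_comm]

/-- Local complementations at distinct non-adjacent vertices commute. -/
theorem stmt8 {V : Type*} (G : SimpleGraph V) (x y : V) (hxy : x ≠ y)
    (hadj : ¬ G.Adj x y) :
    localComplement (localComplement G x) y = localComplement (localComplement G y) x :=
  stmt8_general G x y hadj
end

section
/- A finite connected simple graph G has the property that every partition of its vertex set into two parts each of size at least 2 is a split, if and only if G is a complete graph or a star (a graph having a vertex adjacent to every other vertex, with no other edges). -/
/-- A star: a graph with a vertex adjacent to every other vertex and no other edges. -/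
def IsStar {V : Type*} (G : SimpleGraph V) : Prop :=
  ∃ c : V, ∀ u v : V, G.Adj u v ↔ ((u = c ∧ v ≠ c) ∨ (v = c ∧ u ≠ c))

private lemma exists_adj_of_ne' {V : Type*} {G : SimpleGraph V} (h : G.Preconnected)
    {x z : V} (hxz : x ≠ z) : ∃ w, G.Adj x w := by
  obtain ⟨p⟩ := h x z
  cases p with
  | nil => exact absurd rfl hxz
  | cons h' _ => exact ⟨_, h'⟩

private lemma four_le_card' {V : Type*} [Fintype V] {a b c d : V} (h1 : a ≠ b) (h2 : a ≠ c)
    (h3 : a ≠ d) (h4 : b ≠ c) (h5 : b ≠ d) (h6 : c ≠ d) : 4 ≤ Fintype.card V := by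
  classical
  calc 4 = ({a, b, c, d} : Finset V).card := by
        rw [Finset.card_insert_of_notMem (by simp [h1, h2, h3]),
            Finset.card_insert_of_notMem (by simp [h4, h5]),
            Finset.card_insert_of_notMem (by simp [h6]), Finset.card_singleton]
    _ ≤ Fintype.card V := Finset.card_le_univ _

/-- A finite connected simple graph has the property that every bipartition of its
vertices into two parts of size at least 2 is a split, iff it is complete or a star. -/
theorem stmt10 {V : Type*} [Fintype V] (G : SimpleGraph V) (hconn : G.Connected) :
    (∀ V0 V1 : Set V, V0 ∪ V1 = Set.univ → Disjoint V0 V1 →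
        2 ≤ V0.ncard → 2 ≤ V1.ncard → IsSplit G V0 V1) ↔
      (G = ⊤ ∨ IsStar G) := by
  classical
  constructor
  · intro h
    rcases le_or_gt 4 (Fintype.card V) with h4 | h4
    · -- the main case: at least 4 vertices
      by_cases hcomp : ∀ u v : V, u ≠ v → G.Adj u v
      · left
        ext u v
        simp only [SimpleGraph.top_adj]
        exact ⟨fun h' => h'.ne, hcomp u v⟩
      · right
        push_neg at hcomp
        obtain ⟨x0, z0, hxz0, hnadj0⟩ := hcomp
        have nbr' : ∀ v : V, ∃ w, G.Adj v w := by
          intro v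
          obtain ⟨u, hu⟩ := Fintype.exists_ne_of_one_lt_card (by omega) v
          exact exists_adj_of_ne' hconn.preconnected (Ne.symm hu)
        have key : ∀ a b : V, a ≠ b →
            (∀ w, w ≠ a → w ≠ b → (G.Adj a w ↔ G.Adj b w)) ∨
            (∀ w, w ≠ a → w ≠ b → ¬ G.Adj a w) ∨
            (∀ w, w ≠ a → w ≠ b → ¬ G.Adj b w) := by
          intro a b hab
          have hcc : 2 ≤ ({a, b}ᶜ : Set V).ncard := by
            have hsum := Set.ncard_add_ncard_compl ({a, b} : Set V)
            rw [Set.ncard_pair hab] at hsum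
            have hcV : Nat.card V = Fintype.card V := Nat.card_eq_fintype_card
            omega
          have hsp := h {a, b} {a, b}ᶜ (Set.union_compl_self _) disjoint_compl_right
            (Set.ncard_pair hab).ge hcc
          obtain ⟨-, -, -, -, U0, hU0, U1, hU1, hiff⟩ := hsp
          by_cases ha : a ∈ U0
          · by_cases hb : b ∈ U0
            · left
              intro w hwa hwb
              rw [hiff a (by simp) w (by simp [hwa, hwb]),
                hiff b (by simp) w (by simp [hwa, hwb])]
              tauto
            · right; right
              intro w hwa hwb hadj
              rw [hiff b (by simp) w (by simp [hwa, hwb])] at hadj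
              exact hb hadj.1
          · right; left
            intro w hwa hwb hadj
            rw [hiff a (by simp) w (by simp [hwa, hwb])] at hadj
            exact ha hadj.1
        have c1 : ∀ a b : V, a ≠ b → ¬ G.Adj a b → ∀ w, G.Adj a w ↔ G.Adj b w := by
          intro a b hab hnab w
          rcases key a b hab with hk | hk | hk
          · by_cases hwa : w = a
            · subst hwa
              constructor
              · intro hh; exact absurd hh (G.irrefl)
              · intro hh; exact absurd hh.symm hnab
            by_cases hwb : w = b
            · subst hwb
              constructor
              · intro hh; exact absurd hh hnab
              · intro hh; exact absurd hh (G.irrefl)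
            exact hk w hwa hwb
          · exfalso
            obtain ⟨w', hw'⟩ := nbr' a
            have h1 : w' ≠ a := fun e => G.irrefl (e ▸ hw')
            have h2 : w' ≠ b := fun e => hnab (e ▸ hw')
            exact hk w' h1 h2 hw'
          · exfalso
            obtain ⟨w', hw'⟩ := nbr' b
            have h1 : w' ≠ a := fun e => hnab (e ▸ hw').symm
            have h2 : w' ≠ b := fun e => G.irrefl (e ▸ hw')
            exact hk w' h1 h2 hw'
        have c2 : ∀ a b : V, a ≠ b → ¬ G.Adj a b → ∃ y, ∀ w, G.Adj a w ↔ w = y := by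
          intro a b hab hnab
          obtain ⟨y, hy⟩ := nbr' a
          refine ⟨y, fun w => ⟨fun hw => ?_, fun hw => hw ▸ hy⟩⟩
          by_contra hwy
          have hya : y ≠ a := fun e => G.irrefl (e ▸ hy)
          have hyb : y ≠ b := fun e => hnab (e ▸ hy)
          have hby : G.Adj b y := (c1 a b hab hnab y).mp hy
          rcases key a y hya.symm with hk | hk | hk
          · exact hnab ((hk b (Ne.symm hab) hyb.symm).mpr hby.symm)
          · exact hk w (fun e => G.irrefl (e ▸ hw)) hwy hw
          · exact hk b (Ne.symm hab) hyb.symm hby.symm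
        obtain ⟨y, hy⟩ := c2 x0 z0 hxz0 hnadj0
        have hall : ∀ w, w ≠ y → ∀ v, G.Adj w v ↔ v = y := by
          intro w hwy v
          by_cases hwx : w = x0
          · subst hwx; exact hy v
          · have hnxw : ¬ G.Adj x0 w := fun hadj => hwy ((hy w).mp hadj)
            have hxw : x0 ≠ w := fun e => hwx e.symm
            rw [← c1 x0 w hxw hnxw v]
            exact hy v
        refine ⟨y, fun u v => ?_⟩
        by_cases huy : u = y
        · by_cases hvy : v = y
          · rw [huy, hvy]
            simp
          · have hvy' : G.Adj v y := (hall v hvy y).mpr rfl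
            rw [huy]
            simp [hvy'.symm, hvy]
        · have h1 := hall u huy v
          constructor
          · intro hadj; exact Or.inr ⟨h1.mp hadj, huy⟩
          · rintro (⟨huy', -⟩ | ⟨rfl, -⟩)
            · exact absurd huy' huy
            · exact h1.mpr rfl
    · -- small cases: at most 3 vertices
      rcases le_or_gt (Fintype.card V) 2 with h2 | h3
      · left
        ext u v
        simp only [SimpleGraph.top_adj]
        refine ⟨fun h' => h'.ne, fun huv => ?_⟩
        have hmem : ∀ w : V, w = u ∨ w = v := by
          intro w
          by_contra hc
          push_neg at hc
          have hthree : 3 ≤ Fintype.card V := by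
            calc 3 = ({w, u, v} : Finset V).card := by
                  rw [Finset.card_insert_of_notMem (by simp [hc.1, hc.2]),
                      Finset.card_insert_of_notMem (by simp [huv]),
                      Finset.card_singleton]
              _ ≤ _ := Finset.card_le_univ _
          omega
        obtain ⟨b, hb⟩ := exists_adj_of_ne' hconn.preconnected huv
        rcases hmem b with rfl | rfl
        · exact absurd hb G.irrefl
        · exact hb
      · -- exactly 3 vertices
        have hcard3 : Fintype.card V = 3 := by omega
        by_cases hcomp : ∀ u v : V, u ≠ v → G.Adj u v
        · left
          ext u v
          simp only [SimpleGraph.top_adj]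
          exact ⟨fun h' => h'.ne, hcomp u v⟩
        · right
          push_neg at hcomp
          obtain ⟨x, z, hxz, hnadj⟩ := hcomp
          obtain ⟨y, hxy⟩ := exists_adj_of_ne' hconn.preconnected hxz
          have hyx : y ≠ x := fun e => G.irrefl (e ▸ hxy)
          have hyz : y ≠ z := fun e => hnadj (e ▸ hxy)
          obtain ⟨y', hzy'⟩ := exists_adj_of_ne' hconn.preconnected hxz.symm
          have hy'z : y' ≠ z := fun e => G.irrefl (e ▸ hzy')
          have hy'x : y' ≠ x := fun e => hnadj (e ▸ hzy').symm
          have hmem : ∀ w : V, w = x ∨ w = y ∨ w = z := by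
            intro w
            by_contra hc
            push_neg at hc
            have h4le : 4 ≤ Fintype.card V :=
              four_le_card' hxz (Ne.symm hyx) (Ne.symm hc.1) (Ne.symm hyz)
                (Ne.symm hc.2.2) (Ne.symm hc.2.1)
            omega
          have hzy : G.Adj z y := by
            rcases hmem y' with rfl | rfl | rfl
            · exact absurd rfl hy'x
            · exact hzy'
            · exact absurd rfl hy'z
          have hyx2 : G.Adj y x := hxy.symm
          have hyz2 : G.Adj y z := hzy.symm
          have hnzx : ¬ G.Adj z x := fun e => hnadj e.symm
          refine ⟨y, fun u v => ?_⟩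
          rcases hmem u with rfl | rfl | rfl <;> rcases hmem v with rfl | rfl | rfl <;>
            simp_all [hxz, hyx, hyz, Ne.symm hyx, Ne.symm hyz, hxz.symm]
  · rintro hGs V0 V1 hu hd h0 h1
    refine ⟨hu, hd, h0, h1, ?_⟩
    rcases hGs with rfl | ⟨c, hc⟩
    · refine ⟨V0, subset_rfl, V1, subset_rfl, fun u hu0 w hw1 => ?_⟩
      simp only [SimpleGraph.top_adj]
      exact ⟨fun _ => ⟨hu0, hw1⟩, fun _ e => Set.disjoint_left.mp hd hu0 (e ▸ hw1)⟩
    · by_cases hcV0 : c ∈ V0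
      · refine ⟨{c}, by simpa using hcV0, V1, subset_rfl, fun u hu0 w hw1 => ?_⟩
        have hwc : w ≠ c := fun e => Set.disjoint_left.mp hd hcV0 (e ▸ hw1)
        rw [hc u w]
        simp [hwc, hw1]
      · have hcV1 : c ∈ V1 := by
          have hcm : c ∈ V0 ∪ V1 := by rw [hu]; exact Set.mem_univ c
          rcases hcm with hm | hm
          exacts [absurd hm hcV0, hm]
        refine ⟨V0, subset_rfl, {c}, by simpa using hcV1, fun u hu0 w hw1 => ?_⟩
        have huc : u ≠ c := fun e => Set.disjoint_left.mp hd hu0 (e ▸ hcV1)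
        rw [hc u w]
        simp [huc, hu0]
end

section
/- Let G be a simple graph on a finite vertex set, v a vertex of even degree, and G' = (G*v) ∖ v the smoothing of G at v. Then G satisfies (EN1) if and only if G' satisfies (EN1). -/
/-- The smoothing of `G` at `v`: the induced subgraph of the local complement `G*v`
on the set of vertices different from `v`. -/
def smoothing {V : Type*} (G : SimpleGraph V) (v : V) : SimpleGraph {x : V | x ≠ v} :=
  SimpleGraph.induce {x : V | x ≠ v} (localComplement G v)

/-- (EN1): every vertex has even degree. -/
def EN1 {V : Type*} (G : SimpleGraph V) : Prop :=
  ∀ x : V, Even (G.neighborSet x).ncard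

/-!
Smoothing at `v` leaves the neighbourhood of a non-neighbour `x` of `v` unchanged, while a
neighbour `x` of `v` gets the neighbourhood `(N(x) ∆ N(v)) ∖ {x, v}`, where both `x` and `v` lie in
the symmetric difference. Hence `|N'(x)| ≡ |N(x)| + |N(v)| (mod 2)`, and `|N(v)|` is even; the
vertex `v` itself is even by hypothesis.
-/

open Set
open scoped symmDiff

theorem Set.even_ncard_symmDiff_iff {α : Type*} {s t : Set α} (hs : s.Finite) (ht : t.Finite) :
    Even (s ∆ t).ncard ↔ (Even s.ncard ↔ Even t.ncard) := by
  have hsub : s ∩ t ⊆ s ∪ t := inter_subset_left.trans subset_union_left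
  rw [show s ∆ t = (s ∪ t) \ (s ∩ t) from symmDiff_eq_sup_sdiff_inf s t,
    ncard_sdiff' hsub (hs.union ht), Nat.even_sub (ncard_le_ncard hsub (hs.union ht)),
    ← Nat.even_add, ncard_union_add_ncard_inter s t hs ht, Nat.even_add]

namespace SimpleGraph

variable {V : Type*} (G : SimpleGraph V)

theorem neighborSet_localComplement_of_adj {c x : V} (hcx : G.Adj c x) :
    (localComplement G c).neighborSet x = (G.neighborSet x ∆ G.neighborSet c) \ {x} := by
  ext u
  simp only [mem_neighborSet, localComplement, Xor', xor_def, mem_sdiff, mem_symmDiff,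
    mem_singleton_iff, hcx, true_and]
  grind [G.adj_comm]

theorem neighborSet_localComplement_of_not_adj {c x : V} (hcx : ¬G.Adj c x) :
    (localComplement G c).neighborSet x = G.neighborSet x := by
  ext u
  simp only [mem_neighborSet, localComplement, Xor', xor_def, hcx, false_and]
  grind [Adj.ne]

theorem image_val_neighborSet_smoothing (v : V) (x : {x : V | x ≠ v}) :
    Subtype.val '' (smoothing G v).neighborSet x = (localComplement G v).neighborSet x \ {v} := by
  ext u
  constructor
  · rintro ⟨u, hxu, rfl⟩
    exact ⟨hxu, u.2⟩
  · rintro ⟨hxu, huv⟩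
    exact ⟨⟨u, huv⟩, hxu, rfl⟩

theorem even_ncard_neighborSet_smoothing_iff [G.LocallyFinite] {v : V}
    (hv : Even (G.neighborSet v).ncard) (x : {x : V | x ≠ v}) :
    Even ((smoothing G v).neighborSet x).ncard ↔ Even (G.neighborSet x).ncard := by
  rw [← ncard_image_of_injective _ Subtype.val_injective, image_val_neighborSet_smoothing]
  by_cases hvx : G.Adj v x
  · have hfin : (G.neighborSet x ∆ G.neighborSet v).Finite := (toFinite _).symmDiff (toFinite _)
    have hpair : {x.1, v} ⊆ G.neighborSet x ∆ G.neighborSet v := by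
      rintro u (rfl | rfl)
      · exact Or.inr ⟨hvx, G.loopless.irrefl _⟩
      · exact Or.inl ⟨hvx.symm, G.loopless.irrefl _⟩
    rw [neighborSet_localComplement_of_adj G hvx, sdiff_sdiff, singleton_union,
      ncard_sdiff' hpair hfin,
      Nat.even_sub (ncard_le_ncard hpair hfin), ncard_pair x.2,
      even_ncard_symmDiff_iff (toFinite _) (toFinite _)]
    simp only [hv, even_two, iff_true]
  · have hv_not_mem : v ∉ G.neighborSet x := fun h ↦ hvx h.symm
    rw [neighborSet_localComplement_of_not_adj G hvx, sdiff_singleton_eq_self hv_not_mem]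

end SimpleGraph

/-- If `v` has even degree then `G` satisfies (EN1) iff the smoothing
`G' = (G*v) ∖ v` satisfies (EN1). -/
theorem stmt12 {V : Type*} [Fintype V] (G : SimpleGraph V) (v : V)
    (hv : Even (G.neighborSet v).ncard) :
    EN1 G ↔ EN1 (smoothing G v) := by
  classical
  refine ⟨fun h x ↦ (G.even_ncard_neighborSet_smoothing_iff hv x).2 (h x), fun h x ↦ ?_⟩
  by_cases hx : x = v
  · exact hx ▸ hv
  · exact (G.even_ncard_neighborSet_smoothing_iff hv ⟨x, hx⟩).1 (h ⟨x, hx⟩)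
end

section
/- Let σ be a chord diagram and let φ, φ' be two framings of σ that assign the same ordered pair to every chord except one chord z, on which the ordered pair is reversed. Then I_{φ'}(x, y) = I_φ(x, y) for all distinct chords x, y both different from z, and for every chord x ≠ z one has I_{φ'}(x, z) + I_φ(x, z) = card(N(x) ∖ {z}) in ZMod 2, where N(x) is the set of chords interlaced with x. -/
/-- The open cyclic arc `(a, b)` in `ZMod (2n)`: the points `a + s` with `0 < s < t`,
where `t = (b - a).val` is the representative of `b - a` in `[0, 2n)`. -/
def arc (n : ℕ) (a b : ZMod (2 * n)) : Set (ZMod (2 * n)) :=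
  {x | ∃ s : ℕ, 0 < s ∧ s < (b - a).val ∧ x = a + (s : ZMod (2 * n))}

/-- Two chords with endpoints `{x1, x2}` and `{y1, y2}` are interlaced iff exactly
one of `y1`, `y2` lies in the arc `(x1, x2)`. -/
def Interlaced (n : ℕ) (x1 x2 y1 y2 : ZMod (2 * n)) : Prop :=
  Xor' (y1 ∈ arc n x1 x2) (y2 ∈ arc n x1 x2)

/-- A framing of the chord diagram `σ`, encoded as the set `S` of `∞`-endpoints:
exactly one endpoint of each chord belongs to `S`. -/
def IsFraming (n : ℕ) (σ : Equiv.Perm (ZMod (2 * n))) (S : Set (ZMod (2 * n))) : Prop :=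
  ∀ i, i ∈ S ↔ σ i ∉ S

open scoped Classical in
/-- The `∞`-endpoint of the chord through `i`, for the framing `S`. -/
noncomputable def inftyEnd {n : ℕ} (σ : Equiv.Perm (ZMod (2 * n)))
    (S : Set (ZMod (2 * n))) (i : ZMod (2 * n)) : ZMod (2 * n) :=
  if i ∈ S then i else σ i

open scoped Classical in
/-- The intersection form `I_φ` of the framed chord diagram `σ`, evaluated on the
chords whose `∞`-endpoints are `p` and `q` (so the ordered endpoint pairs are
`(p, σ p)` and `(q, σ q)`): it is `E(x,y)` plus the number of ordered pairs
`(a, σ a)` forming a chord with `a ∈ (p, σ p)` and `σ a ∈ (q, σ q)`, in `ZMod 2`. -/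
noncomputable def interForm (n : ℕ) (σ : Equiv.Perm (ZMod (2 * n)))
    (p q : ZMod (2 * n)) : ZMod 2 :=
  (if Interlaced n p (σ p) q (σ q) then 1 else 0) +
    (({a : ZMod (2 * n) | a ∈ arc n p (σ p) ∧ σ a ∈ arc n q (σ q)}).ncard : ZMod 2)

/-!
Reframing the chord `z` only moves the `∞`-end of `z`, so the form is unchanged away from `z`.
For `x ≠ z` with `∞`-end `p`, the two values at `(x, z)` are `I(p, z)` and `I(p, σ z)`:
their interlacing terms agree, and the arcs `(z, σ z)` and `(σ z, z)` partition the points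
off `z`, so the sum counts the points `a ≠ z, σ z` of the arc `A = (p, σ p)`. Those with
`σ a ∈ A` come in pairs `{a, σ a}`, so modulo 2 only the endpoints in `A` of chords interlaced
with `x` remain; `σ` matches these with the corresponding endpoints in the opposite arc, so
the count does not depend on which end of `x` is `p`.
-/

open Function Set

section Arc

variable {n : ℕ} [NeZero (2 * n)]

lemma mem_arc_iff {a b x : ZMod (2 * n)} :
    x ∈ arc n a b ↔ 0 < (x - a).val ∧ (x - a).val < (b - a).val := by
  constructor
  · rintro ⟨s, hs0, hst, rfl⟩
    rw [add_sub_cancel_left, ZMod.val_natCast_of_lt (hst.trans (ZMod.val_lt _))]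
    exact ⟨hs0, hst⟩
  · rintro ⟨h0, h1⟩
    exact ⟨(x - a).val, h0, h1, by rw [ZMod.natCast_zmod_val, add_sub_cancel]⟩

lemma ne_left_of_mem_arc {a b x : ZMod (2 * n)} (hx : x ∈ arc n a b) : x ≠ a := by
  rintro rfl; simp [mem_arc_iff] at hx

lemma ne_right_of_mem_arc {a b x : ZMod (2 * n)} (hx : x ∈ arc n a b) : x ≠ b := by
  rintro rfl; rw [mem_arc_iff] at hx; omega

lemma val_sub_add_val_sub {a b : ZMod (2 * n)} (hab : a ≠ b) :
    (b - a).val + (a - b).val = 2 * n := by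
  have : NeZero (b - a) := ⟨sub_ne_zero.mpr hab.symm⟩
  rw [← neg_sub b a, ZMod.val_neg_of_ne_zero]
  have := ZMod.val_lt (b - a)
  omega

lemma mem_arc_swap_iff {a b : ZMod (2 * n)} (hab : a ≠ b) (x : ZMod (2 * n)) :
    x ∈ arc n b a ↔ x ≠ a ∧ x ≠ b ∧ x ∉ arc n a b := by
  have hx : (x - a).val = ((x - b).val + (b - a).val) % (2 * n) := by
    rw [← ZMod.val_add, sub_add_sub_cancel]
  have hba := val_sub_add_val_sub hab
  have hxa := ZMod.val_lt (x - a)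
  have hxb := ZMod.val_lt (x - b)
  have hne : ∀ c d : ZMod (2 * n), c ≠ d ↔ (c - d).val ≠ 0 := fun c d => by
    rw [Ne, Ne, ZMod.val_eq_zero, sub_eq_zero]
  rw [mem_arc_iff, mem_arc_iff, hne x a, hne x b]
  have hab' := (hne b a).mp hab.symm
  rcases Nat.lt_or_ge ((x - b).val + (b - a).val) (2 * n) with h | h
  · rw [Nat.mod_eq_of_lt h] at hx; omega
  · rw [Nat.mod_eq_sub_mod h, Nat.mod_eq_of_lt (by omega)] at hx; omega

lemma disjoint_arc_swap {a b : ZMod (2 * n)} (hab : a ≠ b) :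
    Disjoint (arc n a b) (arc n b a) :=
  disjoint_left.mpr fun _ hx hx' => ((mem_arc_swap_iff hab _).mp hx').2.2 hx

lemma arc_union_arc_swap {a b : ZMod (2 * n)} (hab : a ≠ b) :
    arc n a b ∪ arc n b a = {a, b}ᶜ := by
  ext x
  by_cases hx : x ∈ arc n a b
  · simp [hx, ne_left_of_mem_arc hx, ne_right_of_mem_arc hx]
  · simp [hx, mem_arc_swap_iff hab]

end Arc

section Parity

variable {α : Type*} {σ : α → α}

lemma ncard_cast_zmod_two_eq_zero (hσ : Involutive σ) (hfix : ∀ a, σ a ≠ a) {X : Set α}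
    (hXσ : ∀ a ∈ X, σ a ∈ X) (hX : X.Finite := by toFinite_tac) :
    (X.ncard : ZMod 2) = 0 := by
  rw [ncard_eq_toFinset_card X hX, Finset.card_eq_sum_ones, Nat.cast_sum, Nat.cast_one]
  exact Finset.sum_involution (fun a _ => σ a) (fun _ _ => by decide) (fun a _ _ => hfix a)
    (fun a ha => by simpa using hXσ a (by simpa using ha)) (fun a _ => hσ a)

lemma ncard_cast_zmod_two_eq_ncard_sdiff_preimage (hσ : Involutive σ) (hfix : ∀ a, σ a ≠ a)
    (X : Set α) (hX : X.Finite := by toFinite_tac) :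
    (X.ncard : ZMod 2) = ((X \ σ ⁻¹' X).ncard : ZMod 2) := by
  rw [← ncard_inter_add_ncard_sdiff_eq_ncard X (σ ⁻¹' X) hX, Nat.cast_add,
    ncard_cast_zmod_two_eq_zero hσ hfix _ (hX.inter_of_left _), zero_add]
  rintro a ⟨ha, hσa⟩
  exact ⟨hσa, by rwa [mem_preimage, hσ a]⟩

end Parity

section InftyEnd

variable {n : ℕ} (σ : Equiv.Perm (ZMod (2 * n))) {S S' : Set (ZMod (2 * n))} {i : ZMod (2 * n)}

lemma inftyEnd_of_mem (h : i ∈ S) : inftyEnd σ S i = i := if_pos h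

lemma inftyEnd_of_notMem (h : i ∉ S) : inftyEnd σ S i = σ i := if_neg h

lemma inftyEnd_congr (h : i ∈ S ↔ i ∈ S') : inftyEnd σ S i = inftyEnd σ S' i := by
  by_cases hi : i ∈ S
  · rw [inftyEnd_of_mem σ hi, inftyEnd_of_mem σ (h.mp hi)]
  · rw [inftyEnd_of_notMem σ hi, inftyEnd_of_notMem σ (mt h.mpr hi)]

end InftyEnd

/-- The endpoints in the arc `(x, σ x)` of the chords other than `z` interlaced with `x`; there is
one for each chord of `N(x) ∖ {z}`. -/
def interlacedEnds (n : ℕ) (σ : Equiv.Perm (ZMod (2 * n))) (x z : ZMod (2 * n)) :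
    Set (ZMod (2 * n)) :=
  {a | a ∈ arc n x (σ x) ∧ σ a ∉ arc n x (σ x) ∧ a ≠ z ∧ a ≠ σ z}

section IntersectionForm

variable {n : ℕ} [NeZero (2 * n)] {σ : Equiv.Perm (ZMod (2 * n))}

lemma interForm_add_interForm_swap (hσ : Involutive σ) (hfix : ∀ i, σ i ≠ i)
    (p z : ZMod (2 * n)) :
    interForm n σ p z + interForm n σ p (σ z) = ((interlacedEnds n σ p z).ncard : ZMod 2) := by
  set A := arc n p (σ p)
  have hz : z ≠ σ z := (hfix z).symm
  have hE : Interlaced n p (σ p) (σ z) z ↔ Interlaced n p (σ p) z (σ z) :=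
    (_root_.xor_comm _ _).to_iff
  have hsplit : (A ∩ σ ⁻¹' arc n z (σ z)).ncard + (A ∩ σ ⁻¹' arc n (σ z) z).ncard =
      (A ∩ σ ⁻¹' {z, σ z}ᶜ).ncard := by
    rw [← arc_union_arc_swap hz, preimage_union, inter_union_distrib_left, ncard_union_eq]
    exact (((disjoint_arc_swap hz).preimage σ).inter_left' A).inter_right' A
  have hcross :
      (A ∩ σ ⁻¹' {z, σ z}ᶜ) \ σ ⁻¹' (A ∩ σ ⁻¹' {z, σ z}ᶜ) = interlacedEnds n σ p z := by
    ext a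
    simp only [interlacedEnds, mem_sdiff, mem_inter_iff, mem_preimage, mem_compl_iff,
      mem_insert_iff, mem_singleton_iff, hσ a, hσ z, hσ.eq_iff, mem_ofPred_eq]
    tauto
  calc interForm n σ p z + interForm n σ p (σ z)
      = (((A ∩ σ ⁻¹' arc n z (σ z)).ncard + (A ∩ σ ⁻¹' arc n (σ z) z).ncard : ℕ) :
          ZMod 2) := by
        rw [interForm, interForm, hσ z, hE, add_add_add_comm, CharTwo.add_self_eq_zero,
          zero_add, Nat.cast_add]
        rfl
    _ = _ := by
        rw [hsplit, ncard_cast_zmod_two_eq_ncard_sdiff_preimage hσ hfix, hcross]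

lemma image_interlacedEnds (hσ : Involutive σ) (hfix : ∀ i, σ i ≠ i) (x z : ZMod (2 * n)) :
    σ '' interlacedEnds n σ x z = interlacedEnds n σ (σ x) z := by
  rw [image_eq_preimage_of_inverse hσ.leftInverse hσ.rightInverse]
  ext b
  have hb : b ∈ arc n x (σ x) → b ≠ x ∧ b ≠ σ x :=
    fun h => ⟨ne_left_of_mem_arc h, ne_right_of_mem_arc h⟩
  have hσb : σ b ∈ arc n x (σ x) → σ b ≠ x ∧ σ b ≠ σ x :=
    fun h => ⟨ne_left_of_mem_arc h, ne_right_of_mem_arc h⟩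
  simp only [interlacedEnds, mem_preimage, mem_ofPred_eq, hσ b, hσ x, hσ z,
    mem_arc_swap_iff (hfix x).symm, ne_eq, hσ.eq_iff] at hb hσb ⊢
  tauto

lemma interForm_inftyEnd_add_interForm_swap (hσ : Involutive σ) (hfix : ∀ i, σ i ≠ i)
    (S : Set (ZMod (2 * n))) (x z : ZMod (2 * n)) :
    interForm n σ (inftyEnd σ S x) z + interForm n σ (inftyEnd σ S x) (σ z) =
      ((interlacedEnds n σ x z).ncard : ZMod 2) := by
  rw [interForm_add_interForm_swap hσ hfix]
  by_cases hx : x ∈ S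
  · rw [inftyEnd_of_mem σ hx]
  · rw [inftyEnd_of_notMem σ hx, ← image_interlacedEnds hσ hfix,
      ncard_image_of_injective _ σ.injective]

end IntersectionForm

theorem stmt16_general (n : ℕ) (hn : 1 ≤ n) (σ : Equiv.Perm (ZMod (2 * n)))
    (hinv : ∀ i, σ (σ i) = i) (hfix : ∀ i, σ i ≠ i)
    (S S' : Set (ZMod (2 * n)))
    (z : ZMod (2 * n))
    (hsame : ∀ a : ZMod (2 * n), a ≠ z → a ≠ σ z → (a ∈ S ↔ a ∈ S'))
    (hflip : z ∈ S ↔ z ∉ S') :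
    (∀ x y : ZMod (2 * n), y ≠ x → y ≠ σ x →
      x ≠ z → x ≠ σ z → y ≠ z → y ≠ σ z →
      interForm n σ (inftyEnd σ S' x) (inftyEnd σ S' y) =
        interForm n σ (inftyEnd σ S x) (inftyEnd σ S y)) ∧
    (∀ x : ZMod (2 * n), x ≠ z → x ≠ σ z →
      interForm n σ (inftyEnd σ S' x) (inftyEnd σ S' z) +
          interForm n σ (inftyEnd σ S x) (inftyEnd σ S z) =
        (({a : ZMod (2 * n) | a ∈ arc n x (σ x) ∧ σ a ∉ arc n x (σ x) ∧
            a ≠ z ∧ a ≠ σ z}).ncard : ZMod 2)) := by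
  have : NeZero (2 * n) := ⟨by omega⟩
  refine ⟨fun x y _ _ hxz hxσz hyz hyσz => ?_, fun x hxz hxσz => ?_⟩
  · rw [inftyEnd_congr σ (hsame x hxz hxσz), inftyEnd_congr σ (hsame y hyz hyσz)]
  · set p := inftyEnd σ S x
    have hzflip : interForm n σ p (inftyEnd σ S' z) + interForm n σ p (inftyEnd σ S z) =
        interForm n σ p z + interForm n σ p (σ z) := by
      by_cases hz : z ∈ S
      · rw [inftyEnd_of_notMem σ (hflip.mp hz), inftyEnd_of_mem σ hz, add_comm]
      · rw [inftyEnd_of_mem σ (not_not.mp (mt hflip.mpr hz)), inftyEnd_of_notMem σ hz]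
    rw [← inftyEnd_congr σ (hsame x hxz hxσz), hzflip]
    exact interForm_inftyEnd_add_interForm_swap hinv hfix S x z

/-- If two framings `S`, `S'` of a chord diagram `σ` agree on every chord except the
chord of `z`, where the ordering is reversed, then the intersection forms agree on
pairs of chords not involving `z`, and for any chord `x ≠ z` the forms at `(x, z)`
differ by `card (N(x) ∖ {z})`, the number of chords other than `z` interlaced
with `x`. -/
theorem stmt16 (n : ℕ) (hn : 1 ≤ n) (σ : Equiv.Perm (ZMod (2 * n)))
    (hinv : ∀ i, σ (σ i) = i) (hfix : ∀ i, σ i ≠ i)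
    (S S' : Set (ZMod (2 * n))) (hS : IsFraming n σ S) (hS' : IsFraming n σ S')
    (z : ZMod (2 * n))
    (hsame : ∀ a : ZMod (2 * n), a ≠ z → a ≠ σ z → (a ∈ S ↔ a ∈ S'))
    (hflip : z ∈ S ↔ z ∉ S') :
    (∀ x y : ZMod (2 * n), y ≠ x → y ≠ σ x →
      x ≠ z → x ≠ σ z → y ≠ z → y ≠ σ z →
      interForm n σ (inftyEnd σ S' x) (inftyEnd σ S' y) =
        interForm n σ (inftyEnd σ S x) (inftyEnd σ S y)) ∧
    (∀ x : ZMod (2 * n), x ≠ z → x ≠ σ z →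
      interForm n σ (inftyEnd σ S' x) (inftyEnd σ S' z) +
          interForm n σ (inftyEnd σ S x) (inftyEnd σ S z) =
        (({a : ZMod (2 * n) | a ∈ arc n x (σ x) ∧ σ a ∉ arc n x (σ x) ∧
            a ≠ z ∧ a ≠ σ z}).ncard : ZMod 2)) :=
  stmt16_general n hn σ hinv hfix S S' z hsame hflip
end

section
/- Let σ be a chord diagram with n ≥ 2 chords whose interlace graph is disconnected. Then there exists a connected component of the interlace graph, consisting of k chords with k < n, whose set of 2k endpoints is a cyclic interval, i.e. equals {a, a+1, …, a+2k−1} for some a ∈ ZMod (2n). -/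
/-- Relation on points of the circle whose reflexive-transitive closure describes the
connected components of the interlace graph of `σ`: two points are related when they
belong to the same chord, or when their chords are interlaced. -/
def chordRel (n : ℕ) (σ : Equiv.Perm (ZMod (2 * n))) (a b : ZMod (2 * n)) : Prop :=
  b = σ a ∨ Interlaced n a (σ a) b (σ b)

lemma Finset.even_card_of_fixedPointFree_involution {α : Type*} [DecidableEq α]
    (σ : Equiv.Perm α) (hinv : Function.Involutive σ) (hfix : ∀ i, σ i ≠ i) {s : Finset α}
    (hs : ∀ x, σ x ∈ s ↔ x ∈ s) : Even s.card := by
  have h := Equiv.Perm.two_dvd_card_support (σ := σ.subtypePerm hs)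
    (by ext x; exact hinv x)
  simpa [hfix, even_iff_two_dvd] using h

lemma ZMod.val_sub_of_lt {N : ℕ} [NeZero N] {u v : ZMod N} (h : u.val < v.val) :
    (u - v).val = u.val + N - v.val := by
  have hv := ZMod.val_lt v
  rw [← neg_sub, ZMod.neg_val', ZMod.val_sub h.le, Nat.mod_eq_of_lt (by omega)]
  omega

namespace ChordDiagram

-- `Interlaced` is stated with the deprecated alias `Xor'`, which `simp` does not unfold.
lemma interlaced_iff {n : ℕ} {x₁ x₂ y₁ y₂ : ZMod (2 * n)} :
    Interlaced n x₁ x₂ y₁ y₂ ↔ Xor (y₁ ∈ arc n x₁ x₂) (y₂ ∈ arc n x₁ x₂) :=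
  Iff.rfl

section Geometry

variable {n : ℕ} [NeZero (2 * n)]

lemma mem_arc_iff_val_sub {x a b : ZMod (2 * n)} :
    x ∈ arc n a b ↔ 0 < (x - a).val ∧ (x - a).val < (b - a).val := by
  constructor
  · rintro ⟨s, hs0, hs, rfl⟩
    rw [add_sub_cancel_left, ZMod.val_cast_of_lt (hs.trans (ZMod.val_lt _))]
    exact ⟨hs0, hs⟩
  · rintro ⟨h0, h1⟩
    exact ⟨(x - a).val, h0, h1, by rw [ZMod.natCast_zmod_val, add_sub_cancel]⟩

lemma mem_arc_iff_val {x a b : ZMod (2 * n)} :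
    x ∈ arc n a b ↔ (a.val < x.val ∧ x.val < b.val) ∨
      (b.val < a.val ∧ (x.val < b.val ∨ a.val < x.val)) := by
  have hx := ZMod.val_lt x
  have ha := ZMod.val_lt a
  have hb := ZMod.val_lt b
  rw [mem_arc_iff_val_sub]
  rcases le_or_gt a.val x.val with hax | hax <;> rcases le_or_gt a.val b.val with hab | hab
  · rw [ZMod.val_sub hax, ZMod.val_sub hab]; omega
  · rw [ZMod.val_sub hax, ZMod.val_sub_of_lt hab]; omega
  · rw [ZMod.val_sub_of_lt hax, ZMod.val_sub hab]; omega
  · rw [ZMod.val_sub_of_lt hax, ZMod.val_sub_of_lt hab]; omega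

lemma left_not_mem_arc {a b : ZMod (2 * n)} : a ∉ arc n a b := by
  rw [mem_arc_iff_val]; omega

lemma right_not_mem_arc {a b : ZMod (2 * n)} : b ∉ arc n a b := by
  rw [mem_arc_iff_val]; omega

lemma Interlaced.symm {x₁ x₂ y₁ y₂ : ZMod (2 * n)} (h : Interlaced n x₁ x₂ y₁ y₂)
    (h₁₁ : x₁ ≠ y₁) (h₁₂ : x₁ ≠ y₂) (h₂₁ : x₂ ≠ y₁) (h₂₂ : x₂ ≠ y₂) :
    Interlaced n y₁ y₂ x₁ x₂ := by
  rw [← (ZMod.val_injective _).ne_iff] at h₁₁ h₁₂ h₂₁ h₂₂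
  simp only [interlaced_iff, Xor, mem_arc_iff_val] at h ⊢
  omega

lemma mem_arc_iff_of_interlaced {a b q q' r r' : ZMod (2 * n)} (h : Interlaced n q q' r r')
    (hq : q ∈ arc n a b ↔ q' ∈ arc n a b) (hr : r ∈ arc n a b ↔ r' ∈ arc n a b) :
    q ∈ arc n a b ↔ r ∈ arc n a b := by
  simp only [interlaced_iff, Xor, mem_arc_iff_val] at h hq hr ⊢
  omega

lemma interlaced_of_mem_arc_of_not_mem_arc {a b z w : ZMod (2 * n)} (hz : z ∈ arc n a b)
    (hw : w ∉ arc n a b) (hwb : w ≠ b) : Interlaced n z w a b := by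
  rw [← (ZMod.val_injective _).ne_iff] at hwb
  simp only [interlaced_iff, Xor, mem_arc_iff_val] at hz hw ⊢
  omega

end Geometry

section Components

variable {n : ℕ} {σ : Equiv.Perm (ZMod (2 * n))}

def component (σ : Equiv.Perm (ZMod (2 * n))) (x : ZMod (2 * n)) : Set (ZMod (2 * n)) :=
  {b | Relation.ReflTransGen (chordRel n σ) x b}

lemma mem_component_self (x : ZMod (2 * n)) : x ∈ component σ x :=
  Relation.ReflTransGen.refl

lemma apply_mem_component_iff (hinv : ∀ i, σ (σ i) = i) {x b : ZMod (2 * n)} :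
    σ b ∈ component σ x ↔ b ∈ component σ x :=
  ⟨fun h => h.tail (Or.inl (hinv b).symm), fun h => h.tail (Or.inl rfl)⟩

variable [NeZero (2 * n)] (hinv : ∀ i, σ (σ i) = i)
include hinv

lemma chordRel_symm {a b : ZMod (2 * n)} (h : chordRel n σ a b) : chordRel n σ b a := by
  rcases h with rfl | h
  · exact Or.inl (hinv a).symm
  have hb : b ≠ a ∧ b ≠ σ a := by
    constructor <;> rintro rfl <;>
      simp [interlaced_iff, hinv, left_not_mem_arc, right_not_mem_arc] at h
  refine Or.inr (Interlaced.symm h hb.1.symm ?_ hb.2.symm ?_)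
  · exact fun h => hb.2 (by rw [h, hinv])
  · exact fun h => hb.1 (σ.injective h.symm)

lemma mem_component_comm {x y : ZMod (2 * n)} (h : y ∈ component σ x) :
    x ∈ component σ y := by
  have : Std.Symm (chordRel n σ) := ⟨fun _ _ => chordRel_symm hinv⟩
  exact Std.Symm.symm _ _ h

lemma not_interlaced_apply_of_not_mem_component {x p z : ZMod (2 * n)}
    (hp : p ∉ component σ x) (hz : z ∈ component σ x) : ¬ Interlaced n p (σ p) z (σ z) :=
  fun h => hp (hz.tail (chordRel_symm hinv (Or.inr h)))

lemma mem_arc_iff_of_not_mem_component {x p q : ZMod (2 * n)} (hp : p ∉ component σ x)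
    (hq : q ∈ component σ x) : q ∈ arc n p (σ p) ↔ x ∈ arc n p (σ p) := by
  have hside : ∀ z ∈ component σ x, z ∈ arc n p (σ p) ↔ σ z ∈ arc n p (σ p) := fun z hz =>
    (not_xor _ _).mp (not_interlaced_apply_of_not_mem_component hinv hp hz)
  induction hq with
  | refl => rfl
  | @tail q r hq hqr ih =>
    refine Iff.trans ?_ ih
    rcases hqr with rfl | h
    · exact (hside q hq).symm
    · exact (mem_arc_iff_of_interlaced h (hside q hq) (hside r (hq.tail (Or.inr h)))).symm

lemma not_interlaced_of_not_mem_component {x p q r : ZMod (2 * n)} (hp : p ∉ component σ x)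
    (hq : q ∈ component σ x) (hr : r ∈ component σ x) : ¬ Interlaced n p (σ p) q r := by
  rw [interlaced_iff, not_xor, mem_arc_iff_of_not_mem_component hinv hp hq,
    mem_arc_iff_of_not_mem_component hinv hp hr]

lemma apply_mem_arc_of_not_mem_component {x a b z : ZMod (2 * n)} (ha : a ∈ component σ x)
    (hb : b ∈ component σ x) (hz : z ∉ component σ x) (hzab : z ∈ arc n a b) :
    σ z ∈ arc n a b := by
  have hσz : σ z ∉ component σ x := (apply_mem_component_iff hinv).not.mpr hz
  by_contra h
  refine not_interlaced_of_not_mem_component hinv hz ha hb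
    (interlaced_of_mem_arc_of_not_mem_arc hzab h ?_)
  rintro rfl
  exact hσz hb

lemma component_subset_arc {x a b p : ZMod (2 * n)} (ha : a ∈ component σ x)
    (hb : b ∈ component σ x) (hp : p ∉ component σ x) (hpab : p ∈ arc n a b) :
    component σ p ⊆ arc n a b := by
  have hout : ∀ z ∈ component σ p, z ∉ component σ x := fun z hz hxz =>
    hp (hxz.trans (mem_component_comm hinv hz))
  have hσ : ∀ z ∈ component σ p, z ∈ arc n a b → σ z ∈ arc n a b := fun z hz =>
    apply_mem_arc_of_not_mem_component hinv ha hb (hout z hz)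
  intro c hc
  induction hc with
  | refl => exact hpab
  | @tail q r hq hqr ih =>
    rcases hqr with rfl | h
    · exact hσ q hq ih
    · have hr : r ∈ component σ p := hq.tail (Or.inr h)
      by_contra hrab
      have hσr : σ r ∉ arc n a b := fun h' => hrab (by
        simpa [hinv] using hσ (σ r) ((apply_mem_component_iff hinv).mpr hr) h')
      exact hrab ((mem_arc_iff_of_interlaced h ⟨hσ q hq, fun _ => ih⟩
        ⟨fun h' => absurd h' hrab, fun h' => absurd h' hσr⟩).mp ih)

end Components

section Intervals

variable {n : ℕ} {σ : Equiv.Perm (ZMod (2 * n))}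

def cyclicInterval (a : ZMod (2 * n)) (L : ℕ) : Set (ZMod (2 * n)) :=
  {c | ∃ s : ℕ, s < L ∧ c = a + (s : ZMod (2 * n))}

lemma mem_cyclicInterval_iff [NeZero (2 * n)] {a c : ZMod (2 * n)} {L : ℕ} :
    c ∈ cyclicInterval a L ↔ (c - a).val < L := by
  constructor
  · rintro ⟨s, hs, rfl⟩
    rw [add_sub_cancel_left, ZMod.val_natCast]
    exact (Nat.mod_le _ _).trans_lt hs
  · exact fun h => ⟨(c - a).val, h, by rw [ZMod.natCast_zmod_val, add_sub_cancel]⟩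

lemma cyclicInterval_mono {a : ZMod (2 * n)} {L L' : ℕ} (h : L ≤ L') :
    cyclicInterval a L ⊆ cyclicInterval a L' :=
  fun _ ⟨s, hs, hc⟩ => ⟨s, hs.trans_le h, hc⟩

lemma mem_cyclicInterval_succ {a c : ZMod (2 * n)} {L : ℕ} (hc : c ∈ cyclicInterval a L)
    (hca : c ≠ a) : c ∈ cyclicInterval (a + 1) (L - 1) := by
  obtain ⟨s, hs, rfl⟩ := hc
  obtain _ | s := s
  · simp at hca
  · exact ⟨s, by omega, by push_cast; ring⟩

lemma mem_cyclicInterval_pred {a c : ZMod (2 * n)} {L : ℕ} (hc : c ∈ cyclicInterval a L)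
    (hca : c ≠ a + ((L - 1 : ℕ) : ZMod (2 * n))) : c ∈ cyclicInterval a (L - 1) := by
  obtain ⟨s, hs, rfl⟩ := hc
  refine ⟨s, ?_, rfl⟩
  by_contra h
  exact hca (by rw [show s = L - 1 by omega])

lemma arc_subset_cyclicInterval (a b : ZMod (2 * n)) :
    arc n a b ⊆ cyclicInterval (a + 1) ((b - a).val - 1) := by
  rintro _ ⟨s, hs0, hs, rfl⟩
  exact ⟨s - 1, by omega, by rw [Nat.cast_sub hs0]; push_cast; ring⟩

lemma component_eq_cyclicInterval_of_minimal [NeZero (2 * n)] (hinv : ∀ i, σ (σ i) = i)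
    {x a : ZMod (2 * n)} {L : ℕ}
    (hsub : component σ x ⊆ cyclicInterval a L)
    (hmin : ∀ L' < L, ∀ y b, ¬ component σ y ⊆ cyclicInterval b L') :
    component σ x = cyclicInterval a L := by
  have hL : 0 < L := by
    obtain ⟨s, hs, -⟩ := hsub (mem_component_self x)
    omega
  have hL2n : L - 1 < 2 * n := by
    by_contra h
    refine hmin (L - 1) (by omega) x x fun c _ => mem_cyclicInterval_iff.mpr ?_
    have := ZMod.val_lt (c - x)
    omega
  set v := a + ((L - 1 : ℕ) : ZMod (2 * n))
  have ha : a ∈ component σ x := by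
    by_contra h
    exact hmin (L - 1) (by omega) x (a + 1) fun c hc =>
      mem_cyclicInterval_succ (hsub hc) (by rintro rfl; exact h hc)
  have hv : v ∈ component σ x := by
    by_contra h
    exact hmin (L - 1) (by omega) x a fun c hc =>
      mem_cyclicInterval_pred (hsub hc) (by rintro rfl; exact h hc)
  have hva : (v - a).val = L - 1 := by
    rw [add_sub_cancel_left, ZMod.val_cast_of_lt hL2n]
  refine hsub.antisymm fun c ⟨s, hs, hc⟩ => ?_
  by_contra hcx
  have hs0 : s ≠ 0 := by rintro rfl; exact hcx (by simpa [hc] using ha)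
  have hsv : s ≠ L - 1 := by rintro rfl; exact hcx (hc ▸ hv)
  have hcav : c ∈ arc n a v := ⟨s, by omega, by omega, hc⟩
  refine hmin (L - 1) (by omega) c (a + 1) fun d hd => ?_
  have := arc_subset_cyclicInterval a v (component_subset_arc hinv ha hv hcx hcav hd)
  exact cyclicInterval_mono (by omega) this

lemma even_of_component_eq_cyclicInterval (hinv : ∀ i, σ (σ i) = i) (hfix : ∀ i, σ i ≠ i)
    {x a : ZMod (2 * n)} {L : ℕ} (h : component σ x = cyclicInterval a L) (hL : L ≤ 2 * n) :
    Even L := by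
  classical
  set t := (Finset.range L).image fun s : ℕ => a + (s : ZMod (2 * n))
  have hmem : ∀ c, c ∈ t ↔ c ∈ component σ x := fun c => by
    simp [t, h, cyclicInterval, eq_comm]
  have hcard : t.card = L := by
    refine (Finset.card_image_of_injOn fun s hs r hr hsr => ?_).trans (Finset.card_range L)
    have := congrArg ZMod.val (add_left_cancel hsr)
    simp only [Finset.coe_range, Set.mem_Iio] at hs hr
    rwa [ZMod.val_cast_of_lt (by omega), ZMod.val_cast_of_lt (by omega)] at this
  rw [← hcard]
  exact Finset.even_card_of_fixedPointFree_involution σ hinv hfix fun c => by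
    rw [hmem, hmem, apply_mem_component_iff hinv]

end Intervals

end ChordDiagram

open ChordDiagram in
/-- If the interlace graph of a chord diagram `σ` with `n ≥ 2` chords is disconnected,
then some connected component, consisting of `k < n` chords, has its `2k` endpoints
forming a cyclic interval `{a, a+1, …, a+2k−1}`. -/
theorem stmt19 (n : ℕ) (hn : 2 ≤ n) (σ : Equiv.Perm (ZMod (2 * n)))
    (hinv : ∀ i, σ (σ i) = i) (hfix : ∀ i, σ i ≠ i)
    (hdisc : ∃ u w : ZMod (2 * n), ¬ Relation.ReflTransGen (chordRel n σ) u w) :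
    ∃ (x a : ZMod (2 * n)) (k : ℕ), 0 < k ∧ k < n ∧
      {b : ZMod (2 * n) | Relation.ReflTransGen (chordRel n σ) x b} =
        {c : ZMod (2 * n) | ∃ s : ℕ, s < 2 * k ∧ c = a + (s : ZMod (2 * n))} := by
  have : NeZero (2 * n) := ⟨by omega⟩
  classical
  obtain ⟨u, w, huw⟩ := hdisc
  have hu : component σ u ⊆ cyclicInterval (w + 1) (2 * n - 1) := fun c hc =>
    mem_cyclicInterval_succ (mem_cyclicInterval_iff.mpr (ZMod.val_lt _))
      (by rintro rfl; exact huw hc)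
  have hex : ∃ L, ∃ y b, component σ y ⊆ cyclicInterval b L := ⟨_, u, w + 1, hu⟩
  obtain ⟨x, a, hsub⟩ := Nat.find_spec hex
  have hx := component_eq_cyclicInterval_of_minimal hinv hsub
    fun L' hL' y b h => Nat.find_min hex hL' ⟨y, b, h⟩
  have hL : Nat.find hex ≤ 2 * n - 1 := Nat.find_min' hex ⟨u, w + 1, hu⟩
  have hL0 : 0 < Nat.find hex := by
    obtain ⟨s, hs, -⟩ := hsub (mem_component_self x)
    omega
  obtain ⟨k, hk⟩ := even_of_component_eq_cyclicInterval hinv hfix hx (by omega)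
  refine ⟨x, a, k, by omega, by omega, ?_⟩
  rw [show 2 * k = Nat.find hex by omega]
  exact hx
end
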